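/- arXiv:1701.03393 — 3 statements merged into one kernel-verified Lean document; each statement's English description precedes it below -/
import Mathlib

section
/- For integers n ≥ 38 and K ≥ n−5, setting η = (K−n+5)/(K+n−5), the quantity T(n,η) = (n−1)(n−2)²(n−3)·η⁴/(12(1−η)⁴) satisfies T(n,η) ≤ K⁴/100. -/
/-- For integers `n ≥ 38` and `K ≥ n−5`, setting `η = (K−n+5)/(K+n−5)`, the quantity
`T(n,η) = (n−1)(n−2)²(n−3)·η⁴/(12(1−η)⁴)` satisfies `T(n,η) ≤ K⁴/100`. -/
theorem volume_bound (n K : ℕ) (hn : 38 ≤ n) (hK : n - 5 ≤ K) :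
    (((K : ℝ) - n + 5) / ((K : ℝ) + n - 5)) ^ 4 *
        (((n : ℝ) - 1) * ((n : ℝ) - 2) ^ 2 * ((n : ℝ) - 3)) /
        (12 * (1 - ((K : ℝ) - n + 5) / ((K : ℝ) + n - 5)) ^ 4)
      ≤ (K : ℝ) ^ 4 / 100 := by
  have hm : (38:ℝ) ≤ (n:ℝ) := by exact_mod_cast hn
  have hK' : (n:ℝ) - 5 ≤ (K:ℝ) := by
    have h5 : (5:ℕ) ≤ n := by omega
    have : ((n - 5 : ℕ) : ℝ) ≤ (K:ℝ) := by exact_mod_cast hK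
    rw [Nat.cast_sub h5] at this
    push_cast at this
    linarith
  set m : ℝ := (n:ℝ)
  set c : ℝ := (K:ℝ)
  have hx0 : 0 ≤ c - m + 5 := by linarith
  have hd : 0 < c + m - 5 := by linarith
  have hd' : c + m - 5 ≠ 0 := ne_of_gt hd
  have hb : (0:ℝ) < 2 * (m - 5) := by linarith
  have hP : (0:ℝ) ≤ (m - 1) * (m - 2) ^ 2 * (m - 3) := mul_nonneg (mul_nonneg (by linarith) (sq_nonneg _)) (by linarith)
  have h1η : 1 - (c - m + 5) / (c + m - 5) = (2 * (m - 5)) / (c + m - 5) := by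
    field_simp; ring
  rw [h1η]
  have heq : ((c - m + 5) / (c + m - 5)) ^ 4 * ((m - 1) * (m - 2) ^ 2 * (m - 3)) /
      (12 * ((2 * (m - 5)) / (c + m - 5)) ^ 4) =
      (c - m + 5) ^ 4 * ((m - 1) * (m - 2) ^ 2 * (m - 3)) / (12 * (2 * (m - 5)) ^ 4) := by
    field_simp
  rw [heq]
  rw [div_le_div_iff₀ (by positivity) (by norm_num)]
  have h1 : (c - m + 5) ^ 4 ≤ c ^ 4 := by
    apply pow_le_pow_left₀ hx0; linarith
  have h2 : 100 * ((m - 1) * (m - 2) ^ 2 * (m - 3)) ≤ 12 * (2 * (m - 5)) ^ 4 := by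
    nlinarith [sq_nonneg (m - 38), sq_nonneg m]
  have h3 : (0:ℝ) ≤ c ^ 4 := by positivity
  nlinarith [mul_le_mul h1 h2 (by positivity) h3]
end

section
/- Laurent–Massart upper tail bound: if U is a chi-squared random variable with D degrees of freedom, then for any x > 0, Pr[U − D ≥ 2√(Dx) + 2x] ≤ exp(−x). -/
/-!
Chernoff's method. A standard Gaussian `Z` has `𝔼 exp (t Z²) = (1 - 2t)^(-1/2)` for `t < 1/2`, so by
independence `P(∑ Zᵢ² ≥ ε) ≤ exp (-t ε) (1 - 2t)^(-D/2)`. Writing `x = D s²` and choosing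
`t = s / (1 + 2s)` turns `(1 - 2t)^(-1/2)` into `√(1 + 2s)`, and `log y ≤ sinh (log y) = (y - y⁻¹)/2`
then bounds the exponent for `ε = D + 2√(Dx) + 2x` by exactly `-x`.
-/

open MeasureTheory ProbabilityTheory Real

namespace ProbabilityTheory

lemma mgf_sq_gaussianReal {t : ℝ} (ht : t < 1 / 2) :
    mgf (fun y => y ^ 2) (gaussianReal 0 1) t = (√(1 - 2 * t))⁻¹ := by
  have hdensity : ∀ y : ℝ, gaussianPDFReal 0 1 y • exp (t * y ^ 2)
      = (√(2 * π))⁻¹ * exp (-(1 / 2 - t) * y ^ 2) := by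
    intro y
    simp only [gaussianPDFReal, NNReal.coe_one, mul_one, sub_zero, smul_eq_mul, mul_assoc,
      ← exp_add]
    ring_nf
  rw [mgf, integral_gaussianReal_eq_integral_smul one_ne_zero]
  simp only [hdensity, integral_const_mul, integral_gaussian]
  rw [← sqrt_inv, ← sqrt_mul (by positivity), ← sqrt_inv]
  congr 1
  have : 1 - 2 * t ≠ 0 := by linarith
  field_simp

variable {Ω : Type*} [MeasurableSpace Ω] {μ : Measure Ω}

lemma mgf_sq_of_map_eq_gaussianReal {Z : Ω → ℝ} (hZ : AEMeasurable Z μ)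
    (hgauss : μ.map Z = gaussianReal 0 1) {t : ℝ} (ht : t < 1 / 2) :
    mgf (fun ω => Z ω ^ 2) μ t = (√(1 - 2 * t))⁻¹ := by
  rw [← mgf_sq_gaussianReal ht, ← hgauss, mgf_map hZ (by fun_prop)]
  rfl

theorem measureReal_sum_sq_ge_le [IsProbabilityMeasure μ] {ι : Type*} [Fintype ι]
    {Z : ι → Ω → ℝ} (hmeas : ∀ i, Measurable (Z i)) (hindep : iIndepFun Z μ)
    (hgauss : ∀ i, μ.map (Z i) = gaussianReal 0 1) {t : ℝ} (ht₀ : 0 ≤ t) (ht : t < 1 / 2)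
    (ε : ℝ) :
    μ.real {ω | ε ≤ ∑ i, Z i ω ^ 2} ≤ exp (-t * ε) * (√(1 - 2 * t))⁻¹ ^ Fintype.card ι := by
  set Y : ι → Ω → ℝ := fun i ω => Z i ω ^ 2
  have hmeasY : ∀ i, Measurable (Y i) := fun i => (hmeas i).pow_const 2
  have hindepY : iIndepFun Y μ := hindep.comp (fun _ y => y ^ 2) (fun _ => by fun_prop)
  have hmgf : mgf (∑ i, Y i) μ t = (√(1 - 2 * t))⁻¹ ^ Fintype.card ι := by
    rw [hindepY.mgf_sum hmeasY, Finset.prod_congr rfl fun i _ =>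
      mgf_sq_of_map_eq_gaussianReal (hmeas i).aemeasurable (hgauss i) ht,
      Finset.prod_const, Finset.card_univ]
  have hint : Integrable (fun ω => exp (t * (∑ i, Y i) ω)) μ := by
    rw [← mgf_pos_iff, hmgf]
    have : 0 < 1 - 2 * t := by linarith
    positivity
  simpa only [Y, hmgf, Finset.sum_apply] using measure_ge_le_exp_mul_mgf ε ht₀ hint

end ProbabilityTheory

lemma sqrt_one_add_two_mul_le_exp {s : ℝ} (hs : 0 ≤ s) :
    √(1 + 2 * s) ≤ exp (s * (1 + s) / (1 + 2 * s)) := by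
  have hpos : 0 < 1 + 2 * s := by linarith
  rw [← exp_log (sqrt_pos.mpr hpos), exp_le_exp, log_sqrt hpos.le]
  have hsinh := self_le_sinh_iff.mpr (log_nonneg (by linarith : (1 : ℝ) ≤ 1 + 2 * s))
  rw [sinh_log hpos] at hsinh
  calc log (1 + 2 * s) / 2 ≤ ((1 + 2 * s) - (1 + 2 * s)⁻¹) / 2 / 2 := by linarith
    _ = s * (1 + s) / (1 + 2 * s) := by field_simp; ring

lemma exp_mul_inv_sqrt_pow_le (D : ℕ) {s : ℝ} (hs : 0 ≤ s) :
    exp (-(s / (1 + 2 * s)) * (D * (1 + 2 * s + 2 * s ^ 2)))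
        * (√(1 - 2 * (s / (1 + 2 * s))))⁻¹ ^ D
      ≤ exp (-(D * s ^ 2)) := by
  have hpos : 0 < 1 + 2 * s := by linarith
  have hinv : (√(1 - 2 * (s / (1 + 2 * s))))⁻¹ = √(1 + 2 * s) := by
    rw [← sqrt_inv]
    congr 1
    field_simp
    ring
  calc _ ≤ exp (-(s / (1 + 2 * s)) * (D * (1 + 2 * s + 2 * s ^ 2)))
          * exp (s * (1 + s) / (1 + 2 * s)) ^ D := by
        rw [hinv]
        gcongr
        exact sqrt_one_add_two_mul_le_exp hs
    _ = exp (-(D * s ^ 2)) := by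
        rw [← exp_nat_mul, ← exp_add]
        congr 1
        field_simp
        ring

/-- Laurent–Massart upper tail bound: if `U` is a chi-squared random variable with `D` degrees
of freedom (the sum of squares of `D` independent standard normals), then for any `x > 0`,
`Pr[U − D ≥ 2√(Dx) + 2x] ≤ exp(−x)`. -/
theorem laurent_massart_upper_tail
    {Ω : Type*} [MeasurableSpace Ω] (μ : Measure Ω) [IsProbabilityMeasure μ]
    (D : ℕ) (hD : 0 < D) (Z : Fin D → Ω → ℝ)
    (hmeas : ∀ i, Measurable (Z i))
    (hindep : iIndepFun Z μ)
    (hgauss : ∀ i, μ.map (Z i) = gaussianReal 0 1)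
    (x : ℝ) (hx : 0 < x) :
    μ {ω | 2 * Real.sqrt ((D : ℝ) * x) + 2 * x ≤ (∑ i, (Z i ω) ^ 2) - D}
      ≤ ENNReal.ofReal (Real.exp (-x)) := by
  have hDpos : (0 : ℝ) < D := Nat.cast_pos.mpr hD
  obtain ⟨s, hs, rfl⟩ : ∃ s : ℝ, 0 ≤ s ∧ x = D * s ^ 2 :=
    ⟨√(x / D), sqrt_nonneg _, by rw [sq_sqrt (by positivity)]; field_simp⟩
  have hsqrt : √(D * (D * s ^ 2)) = D * s := by
    rw [← sqrt_sq (by positivity : (0 : ℝ) ≤ D * s)]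
    ring_nf
  have ht : s / (1 + 2 * s) < 1 / 2 := by
    rw [div_lt_iff₀ (by linarith)]
    linarith
  have htail := measureReal_sum_sq_ge_le hmeas hindep hgauss (div_nonneg hs (by linarith)) ht
    (D * (1 + 2 * s + 2 * s ^ 2))
  rw [Fintype.card_fin] at htail
  calc μ {ω | 2 * √(D * (D * s ^ 2)) + 2 * (D * s ^ 2) ≤ (∑ i, Z i ω ^ 2) - D}
      = μ {ω | D * (1 + 2 * s + 2 * s ^ 2) ≤ ∑ i, Z i ω ^ 2} := by
        congr 1 with ω
        rw [Set.mem_ofPred_eq, Set.mem_ofPred_eq, hsqrt, le_sub_iff_add_le]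
        ring_nf
    _ ≤ ENNReal.ofReal (exp (-(D * s ^ 2))) := by
        rw [← ofReal_measureReal]
        exact ENNReal.ofReal_le_ofReal (htail.trans (exp_mul_inv_sqrt_pow_le D hs))
end

section
/- Laurent–Massart lower tail bound: if U is a chi-squared random variable with D degrees of freedom, then for any x > 0, Pr[D − U ≥ 2√(Dx)] ≤ exp(−x). -/
/-!
Chernoff's method. For `s ≥ 0`, `P(U ≤ D - a) ≤ e^{s(D - a)} E[e^{-sU}] = e^{s(D - a)} (1 + 2s)^{-D/2}`,
and `log (1 + u) ≥ u - u²/2` bounds this by `exp (D s² - s a)`. With `a = 2√(Dx)` the choice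
`s = √(x/D)` makes the exponent `x - 2x = -x`.
-/

open MeasureTheory ProbabilityTheory Real

lemma Real.sub_sq_div_two_le_log_one_add {u : ℝ} (hu : 0 ≤ u) : u - u ^ 2 / 2 ≤ log (1 + u) := by
  refine le_trans ?_ (le_log_one_add_of_nonneg hu)
  rw [le_div_iff₀ (by positivity)]
  nlinarith [pow_nonneg hu 3]

lemma Real.sqrt_inv_one_add_two_mul_le_exp {s : ℝ} (hs : 0 ≤ s) :
    √((1 + 2 * s)⁻¹) ≤ exp (s ^ 2 - s) := by
  have h_pos : 0 < 1 + 2 * s := by positivity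
  have h_log : 2 * s - 2 * s ^ 2 ≤ log (1 + 2 * s) := by
    convert sub_sq_div_two_le_log_one_add (u := 2 * s) (by positivity) using 1
    ring
  rw [sqrt_le_iff, ← exp_nat_mul, inv_le_iff_one_le_mul₀ h_pos]
  refine ⟨(exp_pos _).le, ?_⟩
  calc (1 : ℝ) = exp ((2 : ℕ) * (s ^ 2 - s)) * exp (2 * s - 2 * s ^ 2) := by
        rw [← exp_add, ← exp_zero]; push_cast; ring_nf
    _ ≤ exp ((2 : ℕ) * (s ^ 2 - s)) * (1 + 2 * s) := by
        gcongr
        rwa [← le_log_iff_exp_le h_pos]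

/-- For `t ≥ 1/2` both sides vanish: the integral diverges and `Real.sqrt` of a nonpositive number
is `0`. -/
lemma mgf_sq_gaussianReal (t : ℝ) :
    mgf (fun y => y ^ 2) (gaussianReal 0 1) t = √((1 - 2 * t)⁻¹) := by
  have h_integrand : ∀ y : ℝ, gaussianPDFReal 0 1 y • exp (t * y ^ 2)
      = (√(2 * π))⁻¹ * exp (-(1 / 2 - t) * y ^ 2) := by
    intro y
    simp only [gaussianPDFReal, NNReal.coe_one, mul_one, sub_zero, smul_eq_mul, mul_assoc,
      ← exp_add]
    ring_nf
  have h_ratio : π / (1 / 2 - t) = 2 * π * (1 - 2 * t)⁻¹ := by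
    rw [div_eq_mul_inv, show 1 / 2 - t = (1 - 2 * t) / 2 by ring, inv_div, div_eq_mul_inv]
    ring
  rw [mgf, integral_gaussianReal_eq_integral_smul one_ne_zero]
  simp_rw [h_integrand]
  rw [integral_const_mul, integral_gaussian, h_ratio, sqrt_mul (by positivity : (0 : ℝ) ≤ 2 * π),
    inv_mul_cancel_left₀ (by positivity)]

section ChiSquared

variable {Ω ι : Type*} [MeasurableSpace Ω] {μ : Measure Ω}

lemma aemeasurable_of_map_eq_gaussianReal {X : Ω → ℝ} {m : ℝ} {v : NNReal}
    (h : μ.map X = gaussianReal m v) : AEMeasurable X μ :=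
  aemeasurable_of_map_neZero (by rw [h]; infer_instance)

variable [Fintype ι] {Z : ι → Ω → ℝ}

lemma mgf_sum_sq_of_gaussianReal (hindep : iIndepFun Z μ)
    (hgauss : ∀ i, μ.map (Z i) = gaussianReal 0 1) (t : ℝ) :
    mgf (fun ω => ∑ i, Z i ω ^ 2) μ t = √((1 - 2 * t)⁻¹) ^ Fintype.card ι := by
  have hZ i : AEMeasurable (Z i) μ := aemeasurable_of_map_eq_gaussianReal (hgauss i)
  have h_sq_indep : iIndepFun (fun i ω => Z i ω ^ 2) μ :=
    hindep.comp (fun _ y => y ^ 2) (fun _ => measurable_id.pow_const 2)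
  have h_mgf_sq : ∀ i, mgf (fun ω => Z i ω ^ 2) μ t = √((1 - 2 * t)⁻¹) := fun i => by
    rw [← mgf_sq_gaussianReal t, ← hgauss i,
      mgf_map (hZ i) (by fun_prop : Continuous fun y : ℝ => exp (t * y ^ 2)).aestronglyMeasurable]
    rfl
  have h_sum := h_sq_indep.mgf_sum₀ (t := t) (fun i => (hZ i).pow_const 2) Finset.univ
  simp only [h_mgf_sq, Finset.prod_const, Finset.card_univ] at h_sum
  rw [← h_sum]
  congr 1
  ext ω
  simp

lemma measureReal_sum_sq_le_card_sub_le (hindep : iIndepFun Z μ)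
    (hgauss : ∀ i, μ.map (Z i) = gaussianReal 0 1) {s : ℝ} (hs : 0 ≤ s) (a : ℝ) :
    μ.real {ω | ∑ i, Z i ω ^ 2 ≤ Fintype.card ι - a}
      ≤ exp (Fintype.card ι * s ^ 2 - s * a) := by
  have := hindep.isProbabilityMeasure
  have hZ i : AEMeasurable (Z i) μ := aemeasurable_of_map_eq_gaussianReal (hgauss i)
  have h_int : Integrable (fun ω => exp (-s * ∑ i, Z i ω ^ 2)) μ := by
    refine (integrable_const 1).mono' ?_ (ae_of_all _ fun ω => ?_)
    · exact (Finset.aemeasurable_fun_sum _ fun i _ => (hZ i).pow_const 2).const_mul _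
        |>.exp.aestronglyMeasurable
    · rw [norm_of_nonneg (exp_pos _).le, exp_le_one_iff, neg_mul, neg_nonpos]
      exact mul_nonneg hs (Finset.sum_nonneg fun i _ => sq_nonneg _)
  calc μ.real {ω | ∑ i, Z i ω ^ 2 ≤ Fintype.card ι - a}
      ≤ exp (- -s * (Fintype.card ι - a)) * √((1 - 2 * -s)⁻¹) ^ Fintype.card ι := by
        rw [← mgf_sum_sq_of_gaussianReal hindep hgauss]
        exact measure_le_le_exp_mul_mgf _ (neg_nonpos.mpr hs) h_int
    _ ≤ exp (s * (Fintype.card ι - a)) * exp (s ^ 2 - s) ^ Fintype.card ι := by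
        rw [neg_neg, mul_neg, sub_neg_eq_add]
        gcongr
        exact sqrt_inv_one_add_two_mul_le_exp hs
    _ = exp (Fintype.card ι * s ^ 2 - s * a) := by
        rw [← exp_nat_mul, ← exp_add]
        ring_nf

end ChiSquared

theorem laurent_massart_lower_tail_general
    {Ω : Type*} [MeasurableSpace Ω] (μ : Measure Ω) [IsProbabilityMeasure μ]
    (D : ℕ) (hD : 0 < D) (Z : Fin D → Ω → ℝ)
    (hindep : iIndepFun Z μ)
    (hgauss : ∀ i, μ.map (Z i) = gaussianReal 0 1)
    (x : ℝ) (hx : 0 < x) :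
    μ {ω | 2 * Real.sqrt ((D : ℝ) * x) ≤ (D : ℝ) - ∑ i, (Z i ω) ^ 2}
      ≤ ENNReal.ofReal (Real.exp (-x)) := by
  have hD' : (0 : ℝ) < D := by exact_mod_cast hD
  set s := √(x / D)
  have hs_sq : (D : ℝ) * s ^ 2 = x := by
    rw [sq_sqrt (by positivity)]
    field_simp
  have hs_mul : s * (2 * √(D * x)) = 2 * x := by
    rw [mul_left_comm, ← sqrt_mul (by positivity), show x / D * (D * x) = x * x by field_simp,
      sqrt_mul_self hx.le]
  have h_tail := measureReal_sum_sq_le_card_sub_le hindep hgauss (sqrt_nonneg (x / D))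
    (2 * √(D * x))
  rw [Fintype.card_fin, hs_sq, hs_mul] at h_tail
  have h_event : {ω | 2 * √(D * x) ≤ D - ∑ i, Z i ω ^ 2}
      = {ω | ∑ i, Z i ω ^ 2 ≤ D - 2 * √(D * x)} := by
    ext ω
    exact le_sub_comm (α := ℝ)
  rw [h_event, ← ofReal_measureReal]
  exact ENNReal.ofReal_le_ofReal (h_tail.trans_eq (by ring_nf))

/-- Laurent–Massart lower tail bound: if `U` is a chi-squared random variable with `D` degrees
of freedom (the sum of squares of `D` independent standard normals), then for any `x > 0`,
`Pr[D − U ≥ 2√(Dx)] ≤ exp(−x)`. -/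
theorem laurent_massart_lower_tail
    {Ω : Type*} [MeasurableSpace Ω] (μ : Measure Ω) [IsProbabilityMeasure μ]
    (D : ℕ) (hD : 0 < D) (Z : Fin D → Ω → ℝ)
    (hmeas : ∀ i, Measurable (Z i))
    (hindep : iIndepFun Z μ)
    (hgauss : ∀ i, μ.map (Z i) = gaussianReal 0 1)
    (x : ℝ) (hx : 0 < x) :
    μ {ω | 2 * Real.sqrt ((D : ℝ) * x) ≤ (D : ℝ) - ∑ i, (Z i ω) ^ 2}
      ≤ ENNReal.ofReal (Real.exp (-x)) :=
  laurent_massart_lower_tail_general μ D hD Z hindep hgauss x hx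
end
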